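/- There exists a finite-or-infinite strategy profile that is convergent but not always-convergent: ∃ s ∈ InfStratProf, conv(s) ∧ ¬□conv(s). A witness is the profile s_{1□2} of Figure 2, whose root agent A chooses 1 into a leaf while the remainder of the comb cycles with both agents choosing 2. -/

import Mathlib

noncomputable section

/-- The two agents. -/
inductive Ag : Type
  | A
  | B
deriving DecidableEq

/-- The set of choices `{1, 2}`. -/
inductive Choice : Type
  | one
  | two
deriving DecidableEq

/-- The polynomial functor whose final coalgebra is the set of finite or
infinite strategy profiles: a node is either an ending position carrying a
utility assignment (no children) or an internal position carrying an agent
and a choice (two children, indexed by `Bool`). -/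
def SPF (Agent : Type) : PFunctor.{0} :=
  ⟨(Agent → ℝ) ⊕ (Agent × Choice), fun x => Sum.rec (fun _ => Empty) (fun _ => Bool) x⟩

/-- Finite or infinite strategy profiles, as the M-type (final coalgebra). -/
def StratProf (Agent : Type) : Type :=
  (SPF Agent).M

/-- The ending position `⟨u⟩`. -/
def leafP {Agent : Type} (u : Agent → ℝ) : StratProf Agent :=
  PFunctor.M.mk ⟨Sum.inl u, fun e => Empty.elim e⟩

/-- The strategy profile `⟨a, c, s₁, s₂⟩`. -/
def nodeP {Agent : Type} (a : Agent) (c : Choice) (s₁ s₂ : StratProf Agent) :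
    StratProf Agent :=
  PFunctor.M.mk ⟨Sum.inr (a, c), fun b => bif b then s₂ else s₁⟩

/-- The child selected by choice `c`. -/
def cchild {Agent : Type} (c : Choice) (s₁ s₂ : StratProf Agent) : StratProf Agent :=
  match c with
  | .one => s₁
  | .two => s₂

/-- `conv s`: following the choices of `s` reaches an ending position after
finitely many steps (inductive definition). -/
inductive Conv {Agent : Type} : StratProf Agent → Prop
  | leaf (u : Agent → ℝ) : Conv (leafP u)
  | node1 (a : Agent) (s₁ s₂ : StratProf Agent) :
      Conv s₁ → Conv (nodeP a Choice.one s₁ s₂)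
  | node2 (a : Agent) (s₁ s₂ : StratProf Agent) :
      Conv s₂ → Conv (nodeP a Choice.two s₁ s₂)

/-- The graph of the (partial) utility assignment `ŝ`:
`UtilR s u` holds iff following the choices of `s` reaches the ending
position `⟨u⟩`. -/
inductive UtilR {Agent : Type} : StratProf Agent → (Agent → ℝ) → Prop
  | leaf (u : Agent → ℝ) : UtilR (leafP u) u
  | node1 (a : Agent) (s₁ s₂ : StratProf Agent) (u : Agent → ℝ) :
      UtilR s₁ u → UtilR (nodeP a Choice.one s₁ s₂) u
  | node2 (a : Agent) (s₁ s₂ : StratProf Agent) (u : Agent → ℝ) :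
      UtilR s₂ u → UtilR (nodeP a Choice.two s₁ s₂) u

open Classical in
/-- The utility assignment `ŝ` (an arbitrary default on non-convergent
profiles). -/
def util {Agent : Type} (s : StratProf Agent) : Agent → ℝ :=
  if h : ∃ u, UtilR s u then h.choose else fun _ => 0

/-- `□P`, the coinductive `always` modality: `P` holds at every position of
the strategy profile (greatest fixed point). -/
def Always {Agent : Type} (P : StratProf Agent → Prop) (s : StratProf Agent) : Prop :=
  ∃ R : StratProf Agent → Prop, R s ∧ ∀ t, R t →
    P t ∧ ∀ a c s₁ s₂, t = nodeP a c s₁ s₂ → R s₁ ∧ R s₂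

/-- `PE s`: `s` is always-convergent and the choice at the root of `s` is at
least as good, for the agent who owns the root, as the other choice. -/
def PE {Agent : Type} (s : StratProf Agent) : Prop :=
  Always Conv s ∧
    (∀ a s₁ s₂, s = nodeP a Choice.one s₁ s₂ → util s₁ a ≥ util s₂ a) ∧
    (∀ a s₁ s₂, s = nodeP a Choice.two s₁ s₂ → util s₂ a ≥ util s₁ a)

/-- Subgame perfect equilibrium: `□PE`. -/
def SPE {Agent : Type} : StratProf Agent → Prop :=
  Always PE

/-- `s =_g s'`: the two strategy profiles have the same underlying game
(coinductive definition). -/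
def SameGame {Agent : Type} (s s' : StratProf Agent) : Prop :=
  ∃ R : StratProf Agent → StratProf Agent → Prop, R s s' ∧ ∀ t t', R t t' →
    (∃ u, t = leafP u ∧ t' = leafP u) ∨
    (∃ a c c' s₁ s₂ s₁' s₂',
      t = nodeP a c s₁ s₂ ∧ t' = nodeP a c' s₁' s₂' ∧ R s₁ s₁' ∧ R s₂ s₂')

/-- `Rat_∞`: rationality for finite or infinite strategy profiles
(coinductive definition). -/
def RatInf {Agent : Type} (s : StratProf Agent) : Prop :=
  ∃ R : StratProf Agent → Prop, R s ∧ ∀ t, R t →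
    (∃ u, t = leafP u) ∨
    (∃ a c s₁ s₂ s₁' s₂', t = nodeP a c s₁ s₂ ∧
      SameGame (nodeP a c s₁' s₂') (nodeP a c s₁ s₂) ∧
      SPE (nodeP a c s₁' s₂') ∧ R (cchild c s₁ s₂))

/-- `diverg`: following the choices never reaches an ending position
(coinductive definition). -/
def Diverg {Agent : Type} (s : StratProf Agent) : Prop :=
  ∃ R : StratProf Agent → Prop, R s ∧ ∀ t, R t →
    ∃ a c s₁ s₂, t = nodeP a c s₁ s₂ ∧ R (cchild c s₁ s₂)

section StratProf

variable {Agent : Type}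

theorem leafP_ne_nodeP (u : Agent → ℝ) (a : Agent) (c : Choice) (s₁ s₂ : StratProf Agent) :
    leafP u ≠ nodeP a c s₁ s₂ := fun h =>
  Sum.inl_ne_inr (congrArg Sigma.fst (PFunctor.M.mk_inj h))

theorem nodeP_inj {a a' : Agent} {c c' : Choice} {s₁ s₂ s₁' s₂' : StratProf Agent}
    (h : nodeP a c s₁ s₂ = nodeP a' c' s₁' s₂') :
    a = a' ∧ c = c' ∧ s₁ = s₁' ∧ s₂ = s₂' := by
  obtain ⟨hac, hs⟩ := Sigma.mk.inj_iff.mp (PFunctor.M.mk_inj h)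
  obtain ⟨rfl, rfl⟩ := Prod.mk.inj (Sum.inr.inj hac)
  exact ⟨rfl, rfl, congrFun (eq_of_heq hs) false, congrFun (eq_of_heq hs) true⟩

theorem Diverg.not_conv {s : StratProf Agent} (hs : Diverg s) : ¬ Conv s := by
  obtain ⟨R, hRs, hR⟩ := hs
  suffices ∀ t, Conv t → ¬ R t from fun hc => this s hc hRs
  intro t ht
  induction ht with
  | leaf u =>
    intro hu
    obtain ⟨a, c, s₁, s₂, h, -⟩ := hR _ hu
    exact leafP_ne_nodeP u a c s₁ s₂ h
  | node1 a s₁ s₂ _ ih =>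
    intro hn
    obtain ⟨a', c, s₁', s₂', h, hc⟩ := hR _ hn
    obtain ⟨-, rfl, rfl, -⟩ := nodeP_inj h
    exact ih hc
  | node2 a s₁ s₂ _ ih =>
    intro hn
    obtain ⟨a', c, s₁', s₂', h, hc⟩ := hR _ hn
    obtain ⟨-, rfl, -, rfl⟩ := nodeP_inj h
    exact ih hc

theorem Always.self {P : StratProf Agent → Prop} {s : StratProf Agent} (hs : Always P s) :
    P s := by
  obtain ⟨R, hRs, hR⟩ := hs
  exact (hR s hRs).1

theorem Always.of_nodeP_right {P : StratProf Agent → Prop} {a : Agent} {c : Choice}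
    {s₁ s₂ : StratProf Agent} (hs : Always P (nodeP a c s₁ s₂)) : Always P s₂ := by
  obtain ⟨R, hRs, hR⟩ := hs
  exact ⟨R, ((hR _ hRs).2 a c s₁ s₂ rfl).2, hR⟩

def loop (a : Agent) (c : Choice) : StratProf Agent :=
  PFunctor.M.corec (fun _ : Unit => ⟨Sum.inr (a, c), fun _ => ()⟩) ()

theorem loop_eq (a : Agent) (c : Choice) : loop a c = nodeP a c (loop a c) (loop a c) := by
  have hdest : PFunctor.M.dest (loop a c) = ⟨Sum.inr (a, c), fun _ => loop a c⟩ :=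
    PFunctor.M.dest_corec _ _
  conv_lhs => rw [← PFunctor.M.mk_dest (loop a c), hdest]
  rw [nodeP]
  congr 2
  funext b
  cases b <;> rfl

theorem diverg_loop (a : Agent) (c : Choice) : Diverg (loop a c) :=
  ⟨(· = loop a c), rfl, fun _ ht => ⟨a, c, loop a c, loop a c, ht.trans (loop_eq a c), by
    cases c <;> rfl⟩⟩

end StratProf

/-- There exists a strategy profile which is convergent but not
always-convergent: `∃ s, conv(s) ∧ ¬ □conv(s)` (a witness is the profile
`s_{1□2}`, whose root agent chooses 1 into a leaf while the remainder of the
comb cycles with both agents choosing 2). -/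
theorem exists_conv_not_alwaysConv :
    ∃ s : StratProf Ag, Conv s ∧ ¬ Always Conv s := by
  refine ⟨nodeP Ag.A Choice.one (leafP fun _ => 0) (loop Ag.A Choice.two), ?_, ?_⟩
  · exact Conv.node1 _ _ _ (Conv.leaf _)
  · exact fun h => (diverg_loop Ag.A Choice.two).not_conv h.of_nodeP_right.self
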